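/- arXiv:2505.13260 — 6 statements merged into one kernel-verified Lean document; each statement's English description precedes it below -/
import Mathlib

section
/- Let A be an abelian category and B ⊆ A a strictly full subcategory closed under subobjects and quotients such that every object of A is an extension of two objects of B. Then the category E_{A,B} of pairs (X, Y) with X ∈ A, Y ⊆ X a subobject, Y ∈ B, and X/Y ∈ B (morphisms being morphisms of pairs) has kernels and cokernels. -/
open CategoryTheory CategoryTheory.Limits

universe v u

variable {A : Type u} [Category.{v} A] [Abelian A]

/-- The unique non-identity arrow `0 ⟶ 1` of the "walking arrow" category `Fin 2`. -/
abbrev arrow01 : ((0 : Fin 2) ⟶ (1 : Fin 2)) := homOfLE (by decide)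

/-- Objects of the category `E_{A,B}`: pairs `(X, Y)` with `Y ⊆ X` a subobject (encoded as a
functor `Fin 2 ⥤ A` whose arrow `Y ⟶ X` is a monomorphism) such that `Y ∈ B` and `X/Y ∈ B`,
where `B` is the full subcategory of objects satisfying `P`. -/
def EProp (P : A → Prop) (F : Fin 2 ⥤ A) : Prop :=
  Mono (F.map arrow01) ∧ P (F.obj 0) ∧ P (cokernel (F.map arrow01))

/-- The category `E_{A,B}` of pairs `(X, Y)`, `Y ⊆ X`, `Y ∈ B`, `X/Y ∈ B`. -/
abbrev ECat (P : A → Prop) := ObjectProperty.FullSubcategory (EProp P)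

@[simps] def mk2 {a b : A} (f : a ⟶ b) : Fin 2 ⥤ A where
  obj i := match i with
    | 0 => a
    | 1 => b
  map {i j} g := match i, j, g with
    | 0, 0, _ => 𝟙 a
    | 0, 1, _ => f
    | 1, 1, _ => 𝟙 b
    | 1, 0, g => absurd (leOfHom g) (by decide)
  map_id i := by fin_cases i <;> rfl
  map_comp {i j k} g h := by
    fin_cases i <;> fin_cases j <;> fin_cases k <;>
      first
        | exact absurd (leOfHom g) (by decide)
        | exact absurd (leOfHom h) (by decide)
        | simp

attribute [reducible] mk2

example {a b : A} (f : a ⟶ b) : (mk2 f).map arrow01 = f := rfl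
example {a b : A} (f : a ⟶ b) : (mk2 f).obj 0 = a := rfl
example {i j : Fin 2} (g h : i ⟶ j) : g = h := Subsingleton.elim _ _

def mkNat {F G : Fin 2 ⥤ A} (p : F.obj 0 ⟶ G.obj 0) (q : F.obj 1 ⟶ G.obj 1)
    (w : F.map arrow01 ≫ q = p ≫ G.map arrow01) : F ⟶ G where
  app i := match i with | 0 => p | 1 => q
  naturality {i j} g := by
    fin_cases i <;> fin_cases j
    · obtain rfl := Subsingleton.elim g (𝟙 _); simp
    · obtain rfl := Subsingleton.elim g arrow01; exact w
    · exact absurd (leOfHom g) (by decide)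
    · obtain rfl := Subsingleton.elim g (𝟙 _); simp

@[simp] lemma mkNat_app0 {F G : Fin 2 ⥤ A} (p : F.obj 0 ⟶ G.obj 0) (q : F.obj 1 ⟶ G.obj 1)
    (w : F.map arrow01 ≫ q = p ≫ G.map arrow01) : (mkNat p q w).app 0 = p := rfl

@[simp] lemma mkNat_app1 {F G : Fin 2 ⥤ A} (p : F.obj 0 ⟶ G.obj 0) (q : F.obj 1 ⟶ G.obj 1)
    (w : F.map arrow01 ≫ q = p ≫ G.map arrow01) : (mkNat p q w).app 1 = q := rfl

@[simp] lemma mk2_map01 {a b : A} (f : a ⟶ b) : (mk2 f).map arrow01 = f := rfl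

lemma natExt {F G : Fin 2 ⥤ A} (α β : F ⟶ G) (h0 : α.app 0 = β.app 0)
    (h1 : α.app 1 = β.app 1) : α = β := by
  apply NatTrans.ext; funext i; fin_cases i <;> assumption

section Chase
open CategoryTheory.Abelian.Pseudoelement

local notation:arg f " ⟦" a "⟧" => pseudoApply f a

lemma mono_cokernel_map {Y X Y' X' : A} (i : Y ⟶ X) [Mono i] (f : Y ⟶ Y') (g : X ⟶ X')
    (i' : Y' ⟶ X') [Mono i'] (w : f ≫ i' = i ≫ g)
    (k : kernel f ⟶ kernel g) (hk : k ≫ kernel.ι g = kernel.ι f ≫ i) :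
    Mono (cokernel.map k i (kernel.ι f) (kernel.ι g) hk) := by
  apply mono_of_zero_of_map_zero
  intro a ha
  obtain ⟨x, rfl⟩ := pseudo_surjective_of_epi (cokernel.π k) a
  rw [← Abelian.Pseudoelement.comp_apply, cokernel.π_desc,
    Abelian.Pseudoelement.comp_apply] at ha
  obtain ⟨y, hy⟩ := pseudo_exact_of_exact (C := A) (ShortComplex.exact_cokernel i)
    (pseudoApply (kernel.ι g) x) ha
  have h1 : pseudoApply f y = 0 := by
    apply pseudo_injective_of_mono i'
    rw [← Abelian.Pseudoelement.comp_apply, w, Abelian.Pseudoelement.comp_apply, hy,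
      ← Abelian.Pseudoelement.comp_apply, kernel.condition, Abelian.Pseudoelement.zero_apply, apply_zero]
  obtain ⟨z, hz⟩ := pseudo_exact_of_exact (C := A) (ShortComplex.exact_kernel f) y h1
  have h2 : pseudoApply k z = x := by
    apply pseudo_injective_of_mono (kernel.ι g)
    rw [← Abelian.Pseudoelement.comp_apply, hk, Abelian.Pseudoelement.comp_apply, hz, hy]
  rw [← h2, ← Abelian.Pseudoelement.comp_apply, cokernel.condition, Abelian.Pseudoelement.zero_apply]

end Chase

@[simp] lemma ecomp_app {P : A → Prop} {X Y Z : ECat P} (f : X ⟶ Y) (g : Y ⟶ Z) (i : Fin 2) :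
    (f ≫ g).hom.app i = f.hom.app i ≫ g.hom.app i := rfl

@[simp] lemma ezero_app {P : A → Prop} (X Y : ECat P) (i : Fin 2) :
    (0 : X ⟶ Y).hom.app i = 0 := rfl

namespace KerAux
variable {P : A → Prop} {FF GG : ECat P} (η : FF ⟶ GG)

lemma kw : (kernel.ι (η.hom.app 0) ≫ FF.obj.map arrow01) ≫ η.hom.app 1 = 0 := by
  rw [Category.assoc, η.hom.naturality, ← Category.assoc, kernel.condition, zero_comp]

noncomputable def k : kernel (η.hom.app 0) ⟶ kernel (η.hom.app 1) :=
  kernel.lift (η.hom.app 1) (kernel.ι (η.hom.app 0) ≫ FF.obj.map arrow01) (kw η)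

lemma hk : k η ≫ kernel.ι (η.hom.app 1) = kernel.ι (η.hom.app 0) ≫ FF.obj.map arrow01 :=
  kernel.lift_ι _ _ _

lemma monok : Mono (k η) := by
  haveI : Mono (FF.obj.map arrow01) := FF.property.1
  have : Mono (k η ≫ kernel.ι (η.hom.app 1)) := by
    rw [hk]; exact mono_comp _ _
  exact mono_of_mono (k η) (kernel.ι (η.hom.app 1))

variable (hsub : ∀ {X Y : A} (f : X ⟶ Y), Mono f → P Y → P X)

include hsub in
lemma propKK : EProp P (mk2 (k η)) := by
  haveI : Mono (FF.obj.map arrow01) := FF.property.1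
  haveI : Mono (GG.obj.map arrow01) := GG.property.1
  refine ⟨monok η, hsub (kernel.ι (η.hom.app 0)) inferInstance FF.property.2.1, ?_⟩
  have hm : Mono (cokernel.map (k η) (FF.obj.map arrow01) (kernel.ι (η.hom.app 0))
      (kernel.ι (η.hom.app 1)) (hk η)) :=
    mono_cokernel_map (FF.obj.map arrow01) (η.hom.app 0) (η.hom.app 1) (GG.obj.map arrow01)
      (η.hom.naturality arrow01).symm _ _
  exact hsub _ hm FF.property.2.2

noncomputable def Kobj : ECat P := ⟨mk2 (k η), propKK η @hsub⟩

attribute [reducible] Kobj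

noncomputable def kι : Kobj η @hsub ⟶ FF :=
  ⟨(mkNat (kernel.ι (η.hom.app 0)) (kernel.ι (η.hom.app 1)) (hk η) :
    (Kobj η @hsub).obj ⟶ FF.obj)⟩

lemma kcond : kι η @hsub ≫ η = 0 := by
  apply ObjectProperty.hom_ext; apply natExt <;> simp [kι, Kobj]

noncomputable def isLimitK : IsLimit (KernelFork.ofι (kι η @hsub) (kcond η @hsub)) := by
  refine KernelFork.IsLimit.ofι _ _ (fun {T} τ hτ => ?_) (fun {T} τ hτ => ?_)
    (fun {T} τ hτ m hm => ?_)
  · have h0 : τ.hom.app 0 ≫ η.hom.app 0 = 0 := by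
      have := congrArg (fun (α : T ⟶ GG) => α.hom.app 0) hτ; simpa using this
    have h1 : τ.hom.app 1 ≫ η.hom.app 1 = 0 := by
      have := congrArg (fun (α : T ⟶ GG) => α.hom.app 1) hτ; simpa using this
    refine ⟨(mkNat (kernel.lift (η.hom.app 0) (τ.hom.app 0) h0) (kernel.lift (η.hom.app 1) (τ.hom.app 1) h1) ?_ :
      T.obj ⟶ (Kobj η @hsub).obj)⟩
    have hK : (Kobj η @hsub).obj.map arrow01 = k η := rfl
    rw [← cancel_mono (kernel.ι (η.hom.app 1)), hK, Category.assoc, Category.assoc, kernel.lift_ι,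
      hk, ← Category.assoc, kernel.lift_ι]
    exact τ.hom.naturality arrow01
  · apply ObjectProperty.hom_ext; apply natExt <;> simp [kι, Kobj] <;> exact kernel.lift_ι _ _ _
  · have hm0 := congrArg (fun (α : T ⟶ FF) => α.hom.app 0) hm
    have hm1 := congrArg (fun (α : T ⟶ FF) => α.hom.app 1) hm
    simp only [ecomp_app] at hm0 hm1
    apply ObjectProperty.hom_ext; apply natExt
    · rw [← cancel_mono (kernel.ι (η.hom.app 0))]
      simpa [kι, Kobj] using hm0.trans (kernel.lift_ι _ _ _).symm
    · rw [← cancel_mono (kernel.ι (η.hom.app 1))]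
      simpa [kι, Kobj] using hm1.trans (kernel.lift_ι _ _ _).symm

end KerAux

namespace CokerAux
variable {P : A → Prop} {FF GG : ECat P} (η : FF ⟶ GG)

/-- The composite `Y' ⟶ X' ⟶ X'/X`. -/
noncomputable def m : GG.obj.obj 0 ⟶ cokernel (η.hom.app 1) :=
  GG.obj.map arrow01 ≫ cokernel.π (η.hom.app 1)

variable (hsub : ∀ {X Y : A} (f : X ⟶ Y), Mono f → P Y → P X)
variable (hquot : ∀ {X Y : A} (f : X ⟶ Y), Epi f → P X → P Y)

include hsub hquot in
lemma propCC : EProp P (mk2 (image.ι (m η))) := by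
  refine ⟨by simpa using inferInstanceAs (Mono (image.ι (m η))),
    hquot (factorThruImage (m η)) inferInstance GG.property.2.1, ?_⟩
  have hφ : Epi (cokernel.desc (GG.obj.map arrow01) (cokernel.π (η.hom.app 1) ≫ cokernel.π (m η))
      (by rw [← Category.assoc]; exact cokernel.condition (m η))) := by
    have : Epi (cokernel.π (η.hom.app 1) ≫ cokernel.π (m η)) := epi_comp _ _
    exact epi_of_epi_fac (cokernel.π_desc _ _ _)
  have h1 : P (cokernel (m η)) := hquot _ hφ GG.property.2.2
  have h2 : P (cokernel (image.ι (m η))) :=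
    hsub (cokernelImageι (m η)).hom inferInstance h1
  exact h2

noncomputable def Cobj : ECat P := ⟨mk2 (image.ι (m η)), propCC η @hsub @hquot⟩

attribute [reducible] Cobj

noncomputable def cπ : GG ⟶ Cobj η @hsub @hquot :=
  ⟨(mkNat (factorThruImage (m η)) (cokernel.π (η.hom.app 1)) (show GG.obj.map arrow01 ≫ cokernel.π (η.hom.app 1) =
      factorThruImage (m η) ≫ (mk2 (image.ι (m η))).map arrow01 from (image.fac (m η)).symm) :
    GG.obj ⟶ (Cobj η @hsub @hquot).obj)⟩

lemma ccond : η ≫ cπ η @hsub @hquot = 0 := by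
  apply ObjectProperty.hom_ext; apply natExt
  · simp only [ecomp_app, ezero_app, cπ, mkNat_app0]
    rw [← cancel_mono (image.ι (m η)), Category.assoc, image.fac, zero_comp, m,
      ← Category.assoc, ← η.hom.naturality arrow01, Category.assoc, cokernel.condition, comp_zero]
  · simp [cπ]

noncomputable def isColimitC :
    IsColimit (CokernelCofork.ofπ (cπ η @hsub @hquot) (ccond η @hsub @hquot)) := by
  refine CokernelCofork.IsColimit.ofπ _ _ (fun {T} τ hτ => ?_) (fun {T} τ hτ => ?_)
    (fun {T} τ hτ m' hm' => ?_)
  · -- desc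
    haveI ht : Mono (T.obj.map arrow01) := T.property.1
    have h1 : η.hom.app 1 ≫ τ.hom.app 1 = 0 := by
      have := congrArg (fun (α : FF ⟶ T) => α.hom.app 1) hτ; simpa using this
    refine ⟨(mkNat (Abelian.monoLift (T.obj.map arrow01)
        (image.ι (m η) ≫ cokernel.desc (η.hom.app 1) (τ.hom.app 1) h1) ?_) 
        (cokernel.desc (η.hom.app 1) (τ.hom.app 1) h1) ?_ :
      (Cobj η @hsub @hquot).obj ⟶ T.obj)⟩
    · have hmd : m η ≫ cokernel.desc (η.hom.app 1) (τ.hom.app 1) h1 = τ.hom.app 0 ≫ T.obj.map arrow01 := by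
        rw [m, Category.assoc, cokernel.π_desc]; exact τ.hom.naturality arrow01
      rw [← cancel_epi (factorThruImage (m η)), comp_zero, ← Category.assoc, ← Category.assoc,
        image.fac, Category.assoc, ← Category.assoc, hmd, Category.assoc,
        cokernel.condition, comp_zero]
    · show image.ι (m η) ≫ _ = _ ≫ T.obj.map arrow01
      rw [Abelian.monoLift_comp]
  · -- fac
    haveI ht : Mono (T.obj.map arrow01) := T.property.1
    apply ObjectProperty.hom_ext; apply natExt
    · simp only [ecomp_app, cπ, mkNat_app0, mkNat_app1]
      rw [← cancel_mono (T.obj.map arrow01), Category.assoc, Abelian.monoLift_comp,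
        ← Category.assoc, image.fac, m, Category.assoc, cokernel.π_desc]
      exact τ.hom.naturality arrow01
      simpa using congrArg (fun (α : FF ⟶ T) => α.hom.app 1) hτ
    · simp [cπ]
      exact cokernel.π_desc _ _ _
  · -- uniq
    haveI ht : Mono (T.obj.map arrow01) := T.property.1
    have hm1 : cokernel.π (η.hom.app 1) ≫ m'.hom.app 1 = τ.hom.app 1 := by
      have := congrArg (fun (α : GG ⟶ T) => α.hom.app 1) hm'
      simpa [cπ] using this
    have hm0 : factorThruImage (m η) ≫ m'.hom.app 0 = τ.hom.app 0 := by
      have := congrArg (fun (α : GG ⟶ T) => α.hom.app 0) hm'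
      simpa [cπ] using this
    have e1 : m'.hom.app 1 = cokernel.desc (η.hom.app 1) (τ.hom.app 1) (by
        have := congrArg (fun (α : FF ⟶ T) => α.hom.app 1) hτ; simpa using this) := by
      rw [← cancel_epi (cokernel.π (η.hom.app 1)), cokernel.π_desc, hm1]
      simpa using congrArg (fun (α : FF ⟶ T) => α.hom.app 1) hτ
    apply ObjectProperty.hom_ext; apply natExt
    · rw [← cancel_mono (T.obj.map arrow01), mkNat_app0, Abelian.monoLift_comp, ← e1]
      have hnat := m'.hom.naturality arrow01
      simp only [mk2_map01] at hnat
      exact hnat.symm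
    · rw [mkNat_app1, e1]
end CokerAux


/-- if `B ⊆ A` is strictly full, closed under subobjects and quotients, and every
object of `A` is an extension of two objects of `B`, then `E_{A,B}` has kernels and cokernels. -/
theorem stmt2 (P : A → Prop)
    (hsub : ∀ {X Y : A} (f : X ⟶ Y), Mono f → P Y → P X)
    (hquot : ∀ {X Y : A} (f : X ⟶ Y), Epi f → P X → P Y)
    (hext : ∀ X : A, ∃ (Y : A) (f : Y ⟶ X), Mono f ∧ P Y ∧ P (cokernel f)) :
    HasKernels (ECat P) ∧ HasCokernels (ECat P) := by
  exact ⟨⟨fun f => HasLimit.mk ⟨_, KerAux.isLimitK f @hsub⟩⟩,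
    ⟨fun f => HasColimit.mk ⟨_, CokerAux.isColimitC f @hsub @hquot⟩⟩⟩
end

section
/- For every object (X,Y) of E_{A,B} there is a functorial admissible short exact sequence 0 → Φ₂(Y) → (X,Y) → Φ₁(X/Y) → 0, where Φ₂(Y) = (Y,Y) and Φ₁(X/Y) = (X/Y, 0). Moreover Φ₂ᴿ ∘ Φ₁ = 0 and the unit id → Φ₂ᴿ∘Φ₂ and counit Φ₁ᴸ∘Φ₁ → id are isomorphisms. -/
open CategoryTheory CategoryTheory.Limits ZeroObject

universe v u

variable {A : Type u} [Category.{v} A] [Abelian A]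

section

variable (P : A → Prop)
    (hsub : ∀ {X Y : A} (f : X ⟶ Y), Mono f → P Y → P X)
    (hquot : ∀ {X Y : A} (f : X ⟶ Y), Epi f → P X → P Y)

/-- `X ↦ (X, 0)` as a functor to arrows. -/
noncomputable def Phi1' : ObjectProperty.FullSubcategory P ⥤ ComposableArrows A 1 where
  obj X := ComposableArrows.mk₁ (0 : (0 : A) ⟶ X.obj)
  map {X Y} f := ComposableArrows.homMk₁ (𝟙 _) f.hom (zero_comp.trans comp_zero.symm)
  map_id X := by apply ComposableArrows.hom_ext₁ <;> simp <;> rfl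
  map_comp f g := by
    apply ComposableArrows.hom_ext₁ <;> simp <;> first | rfl | exact (Category.comp_id _).symm

/-- The functor `Φ₁ : B → E_{A,B}`, `X ↦ (X, 0)`. -/
noncomputable def Phi1 : ObjectProperty.FullSubcategory P ⥤ ECat P :=
  ObjectProperty.lift (EProp P) (Phi1' P) (fun X =>
    ⟨⟨fun {W} g h _ => (isZero_zero A).eq_of_tgt g h⟩,
      hsub (0 : (0 : A) ⟶ X.obj) ⟨fun {W} g h _ => (isZero_zero A).eq_of_tgt g h⟩ X.property,
      hquot (cokernel.π ((Phi1' P).obj X).hom) inferInstance X.property⟩)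

/-- `X ↦ (X, X)` as a functor to arrows. -/
noncomputable def Phi2' : ObjectProperty.FullSubcategory P ⥤ ComposableArrows A 1 where
  obj X := ComposableArrows.mk₁ (𝟙 X.obj)
  map {X Y} f := ComposableArrows.homMk₁ f.hom f.hom ((Category.id_comp _).trans (Category.comp_id _).symm)
  map_id X := by apply ComposableArrows.hom_ext₁ <;> simp <;> rfl
  map_comp f g := by apply ComposableArrows.hom_ext₁ <;> simp <;> rfl

/-- The functor `Φ₂ : B → E_{A,B}`, `X ↦ (X, X)`. -/
noncomputable def Phi2 : ObjectProperty.FullSubcategory P ⥤ ECat P :=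
  ObjectProperty.lift (EProp P) (Phi2' P) (fun X =>
    ⟨inferInstanceAs (Mono (𝟙 X.obj)), X.property,
      hquot (cokernel.π ((Phi2' P).obj X).hom) inferInstance X.property⟩)

/-- The functor `Φ₂ᴿ : E_{A,B} → B`, `(X, Y) ↦ Y`. -/
def Phi2R : ECat P ⥤ ObjectProperty.FullSubcategory P where
  obj e := ⟨e.obj.obj 0, e.property.2.1⟩
  map φ := ObjectProperty.homMk (NatTrans.app φ.hom 0)
  map_id e := rfl
  map_comp f g := rfl

lemma ECat_id_app (e : ECat P) (i : Fin 2) :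
    NatTrans.app (InducedCategory.Hom.hom (𝟙 e)) i = 𝟙 (e.obj.obj i) := rfl

lemma ECat_comp_app {e₁ e₂ e₃ : ECat P} (f : e₁ ⟶ e₂) (g : e₂ ⟶ e₃) (i : Fin 2) :
    NatTrans.app (InducedCategory.Hom.hom (f ≫ g)) i = NatTrans.app f.hom i ≫ NatTrans.app g.hom i := rfl

/-- `(X, Y) ↦ X/Y` as a functor to `A`. -/
noncomputable def Phi1L0 : ECat P ⥤ A where
  obj e := cokernel (e.obj.map arrow01)
  map {e e'} φ := cokernel.map _ _ (NatTrans.app φ.hom 0) (NatTrans.app φ.hom 1)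
    (NatTrans.naturality φ.hom arrow01)
  map_id e := by
    apply coequalizer.hom_ext
    try dsimp only
    simp [cokernel.map, ECat_id_app P]
  map_comp f g := by
    apply coequalizer.hom_ext
    try dsimp only
    simp [cokernel.map, ECat_comp_app P]

/-- The functor `Φ₁ᴸ : E_{A,B} → B`, `(X, Y) ↦ X/Y`. -/
noncomputable def Phi1L : ECat P ⥤ ObjectProperty.FullSubcategory P :=
  ObjectProperty.lift P (Phi1L0 P) (fun e => e.property.2.2)

/-- The canonical morphism `Φ₂(Y) = (Y,Y) ⟶ (X,Y)` in `E_{A,B}`. -/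
noncomputable def iotaE (e : ECat P) : (Phi2 P hquot).obj ((Phi2R P).obj e) ⟶ e :=
  ObjectProperty.homMk (ComposableArrows.homMk₁ (𝟙 (e.obj.obj 0)) (e.obj.map arrow01)
    (by show 𝟙 _ ≫ _ = 𝟙 _ ≫ _; simp))

/-- The canonical morphism `(X,Y) ⟶ Φ₁(X/Y) = (X/Y, 0)` in `E_{A,B}`. -/
noncomputable def piE (e : ECat P) : e ⟶ (Phi1 P hsub hquot).obj ((Phi1L P).obj e) :=
  ObjectProperty.homMk (ComposableArrows.homMk₁ (0 : e.obj.obj 0 ⟶ (0 : A)) (cokernel.π (e.obj.map arrow01))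
    ((cokernel.condition (e.obj.map arrow01)).trans zero_comp.symm))

-- Auxiliary lemmas --------------------------------------------------------

lemma ECat_zero_app {e e' : ECat P} (i : Fin 2) :
    NatTrans.app (0 : e ⟶ e').hom i = 0 := rfl

lemma iotaE_app_zero (e : ECat P) :
    NatTrans.app (iotaE P hquot e).hom 0 = 𝟙 (e.obj.obj 0) := rfl

lemma iotaE_app_one (e : ECat P) :
    NatTrans.app (iotaE P hquot e).hom 1 = e.obj.map arrow01 := rfl

lemma piE_app_zero (e : ECat P) :
    NatTrans.app (piE P hsub hquot e).hom 0 = 0 := rfl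

lemma piE_app_one (e : ECat P) :
    NatTrans.app (piE P hsub hquot e).hom 1 = cokernel.π (e.obj.map arrow01) := rfl

/-- for every object `(X,Y)` of `E_{A,B}` there is a functorial admissible short
exact sequence `0 → Φ₂(Y) → (X,Y) → Φ₁(X/Y) → 0`; moreover `Φ₂ᴿ ∘ Φ₁ = 0` and the unit
`id → Φ₂ᴿ ∘ Φ₂` and counit `Φ₁ᴸ ∘ Φ₁ → id` are isomorphisms. -/
theorem stmt6
    (hext : ∀ X : A, ∃ (Y : A) (f : Y ⟶ X), Mono f ∧ P Y ∧ P (cokernel f)) :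
    (∀ e : ECat P, ∃ w : iotaE P hquot e ≫ piE P hsub hquot e = 0,
      Nonempty (IsLimit (KernelFork.ofι (iotaE P hquot e) w)) ∧
      Nonempty (IsColimit (CokernelCofork.ofπ (piE P hsub hquot e) w))) ∧
    (∀ {e e' : ECat P} (φ : e ⟶ e'),
      (Phi2 P hquot).map ((Phi2R P).map φ) ≫ iotaE P hquot e' = iotaE P hquot e ≫ φ ∧
      piE P hsub hquot e ≫ (Phi1 P hsub hquot).map ((Phi1L P).map φ)
        = φ ≫ piE P hsub hquot e') ∧
    (∀ X : ObjectProperty.FullSubcategory P, IsZero ((Phi2R P).obj ((Phi1 P hsub hquot).obj X))) ∧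
    Nonempty (𝟭 (ObjectProperty.FullSubcategory P) ≅ Phi2 P hquot ⋙ Phi2R P) ∧
    Nonempty (Phi1 P hsub hquot ⋙ Phi1L P ≅ 𝟭 (ObjectProperty.FullSubcategory P)) := by
  refine ⟨?_, ?_, ?_, ?_, ?_⟩
  · intro e
    have hm : Mono (e.obj.map arrow01) := e.property.1
    have w : iotaE P hquot e ≫ piE P hsub hquot e = 0 := by
      apply ObjectProperty.hom_ext
      apply ComposableArrows.hom_ext₁
      · exact (isZero_zero A).eq_of_tgt _ _
      · show e.obj.map arrow01 ≫ cokernel.π _ = 0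
        simp
    refine ⟨w, ⟨?_⟩, ⟨?_⟩⟩
    · refine KernelFork.IsLimit.ofι _ _
        (fun {W} k hk => ?_) (fun {W} k hk => ?_) (fun {W} k hk m hm' => ?_)
      · have h1 : NatTrans.app k.hom 1 ≫ cokernel.π (e.obj.map arrow01) = 0 := by
          have := congrArg (fun t => NatTrans.app t.hom 1) hk
          simp [ECat_comp_app, piE_app_one, ECat_zero_app] at this
          exact this
        refine ObjectProperty.homMk ?_
        exact ComposableArrows.homMk₁ (NatTrans.app k.hom 0)
          (Abelian.monoLift (e.obj.map arrow01) (NatTrans.app k.hom 1) h1)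
          (by
            apply (cancel_mono (e.obj.map arrow01)).1
            show (W.obj.map arrow01 ≫ Abelian.monoLift (e.obj.map arrow01) (NatTrans.app k.hom 1) h1) ≫
              e.obj.map arrow01 = (NatTrans.app k.hom 0 ≫ 𝟙 _) ≫ _
            rw [Category.assoc, Abelian.monoLift_comp]
            rw [Category.comp_id]
            exact NatTrans.naturality k.hom arrow01)
      · apply ObjectProperty.hom_ext
        apply ComposableArrows.hom_ext₁
        · show NatTrans.app k.hom 0 ≫ 𝟙 _ = NatTrans.app k.hom 0
          simp
        · exact Abelian.monoLift_comp (e.obj.map arrow01) _ _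
      · apply ObjectProperty.hom_ext
        apply ComposableArrows.hom_ext₁
        · have h : NatTrans.app (m ≫ iotaE P hquot e).hom 0 = NatTrans.app k.hom 0 :=
            congrArg (fun t => NatTrans.app t.hom 0) hm'
          rw [ECat_comp_app P] at h
          refine Eq.trans ?_ h
          exact (Category.comp_id _).symm
        · apply (cancel_mono (e.obj.map arrow01)).1
          have h : NatTrans.app (m ≫ iotaE P hquot e).hom 1 = NatTrans.app k.hom 1 :=
            congrArg (fun t => NatTrans.app t.hom 1) hm'
          rw [ECat_comp_app P] at h
          exact h.trans (Abelian.monoLift_comp _ _ _).symm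
    · refine CokernelCofork.IsColimit.ofπ _ _
        (fun {W} k hk => ?_) (fun {W} k hk => ?_) (fun {W} k hk m hm' => ?_)
      · have h1 : e.obj.map arrow01 ≫ NatTrans.app k.hom 1 = 0 := by
          have := congrArg (fun t => NatTrans.app t.hom 1) hk
          simp [ECat_comp_app, iotaE_app_one, ECat_zero_app] at this
          exact this
        refine ObjectProperty.homMk ?_
        exact ComposableArrows.homMk₁ 0 (cokernel.desc _ (NatTrans.app k.hom 1) h1)
          ((isZero_zero A).eq_of_src _ _)
      · apply ObjectProperty.hom_ext
        apply ComposableArrows.hom_ext₁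
        · have h0 : NatTrans.app k.hom 0 = 0 := by
            have h : NatTrans.app (iotaE P hquot e ≫ k).hom 0 = NatTrans.app (0 : e ⟶ W).hom 0 :=
              congrArg (fun t => NatTrans.app t.hom 0) hk
            rw [ECat_comp_app P, ECat_zero_app P] at h
            refine Eq.trans ?_ h
            exact (Category.id_comp _).symm
          show (0 : e.obj.obj 0 ⟶ (0 : A)) ≫ _ = NatTrans.app k.hom 0
          exact zero_comp.trans h0.symm
        · show cokernel.π _ ≫ cokernel.desc _ _ _ = NatTrans.app k.hom 1
          exact cokernel.π_desc _ _ _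
      · apply ObjectProperty.hom_ext
        apply ComposableArrows.hom_ext₁
        · exact (isZero_zero A).eq_of_src _ _
        · apply (cancel_epi (cokernel.π (e.obj.map arrow01))).1
          have h : NatTrans.app (piE P hsub hquot e ≫ m).hom 1 = NatTrans.app k.hom 1 :=
            congrArg (fun t => NatTrans.app t.hom 1) hm'
          rw [ECat_comp_app P] at h
          exact h.trans (cokernel.π_desc _ _ _).symm
  · intro e e' φ
    constructor
    · apply ObjectProperty.hom_ext
      apply ComposableArrows.hom_ext₁
      · show NatTrans.app φ.hom 0 ≫ 𝟙 _ = 𝟙 _ ≫ NatTrans.app φ.hom 0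
        simp
      · show NatTrans.app φ.hom 0 ≫ e'.obj.map arrow01 = e.obj.map arrow01 ≫ NatTrans.app φ.hom 1
        exact (NatTrans.naturality φ.hom arrow01).symm
    · apply ObjectProperty.hom_ext
      apply ComposableArrows.hom_ext₁
      · exact (isZero_zero A).eq_of_tgt _ _
      · show cokernel.π (e.obj.map arrow01) ≫
            cokernel.map (e.obj.map arrow01) (e'.obj.map arrow01) (NatTrans.app φ.hom 0)
              (NatTrans.app φ.hom 1) (NatTrans.naturality φ.hom arrow01)
            = NatTrans.app φ.hom 1 ≫ cokernel.π (e'.obj.map arrow01)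
        simp [cokernel.map]
  · intro X
    refine ⟨fun Z => ⟨⟨⟨ObjectProperty.homMk (0 : (0 : A) ⟶ Z.obj)⟩, fun f => ?_⟩⟩,
      fun Z => ⟨⟨⟨ObjectProperty.homMk (0 : Z.obj ⟶ (0 : A))⟩, fun f => ?_⟩⟩⟩
    · exact InducedCategory.hom_ext ((isZero_zero A).eq_of_src f.hom _)
    · exact InducedCategory.hom_ext ((isZero_zero A).eq_of_tgt f.hom _)
  · exact ⟨NatIso.ofComponents (fun X => Iso.refl _) (fun f => by
      show f ≫ 𝟙 _ = 𝟙 _ ≫ f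
      simp)⟩
  · refine ⟨NatIso.ofComponents (fun X => ?_) (fun {X Y} f => ?_)⟩
    · refine ⟨ObjectProperty.homMk (cokernel.desc _ (𝟙 X.obj) ((isZero_zero A).eq_of_src _ _)),
        ObjectProperty.homMk (cokernel.π _), ?_, ?_⟩
      · apply ObjectProperty.hom_ext
        show cokernel.desc _ (𝟙 X.obj) ((isZero_zero A).eq_of_src _ _) ≫ cokernel.π _
          = 𝟙 (cokernel (((Phi1 P hsub hquot).obj X).obj.map arrow01))
        apply coequalizer.hom_ext
        exact (cokernel.π_desc_assoc _ _ _ _).trans ((Category.id_comp _).trans (Category.comp_id _).symm)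
      · apply ObjectProperty.hom_ext
        show cokernel.π _ ≫ cokernel.desc _ (𝟙 X.obj) ((isZero_zero A).eq_of_src _ _)
          = 𝟙 X.obj
        exact cokernel.π_desc _ _ _
    · apply ObjectProperty.hom_ext
      show cokernel.map _ _ (NatTrans.app ((Phi1' P).map f) 0)
          (NatTrans.app ((Phi1' P).map f) 1) (NatTrans.naturality ((Phi1' P).map f) arrow01) ≫
          cokernel.desc _ (𝟙 Y.obj) ((isZero_zero A).eq_of_src _ _) =
        cokernel.desc _ (𝟙 X.obj) ((isZero_zero A).eq_of_src _ _) ≫ f.hom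
      apply coequalizer.hom_ext
      simp only [cokernel.map]
      simp only [cokernel.π_desc_assoc, cokernel.π_desc, Category.assoc]
      erw [cokernel.π_desc, cokernel.π_desc_assoc]
      show f.hom ≫ 𝟙 Y.obj = 𝟙 X.obj ≫ f.hom
      simp

end
end

section
/- Let F : A^op → Ab be an additive presheaf on a small abelian category A. Then the sheafification F^♯ of F for the single epi topology (where a sieve on X is covering iff it contains an epimorphism Y ↠ X) is again an additive functor. -/
open CategoryTheory CategoryTheory.Limits

universe u

open CategoryTheory CategoryTheory.Limits CategoryTheory.GrothendieckTopology
open CategoryTheory.GrothendieckTopology.Plus Opposite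


noncomputable section
namespace Stmt7Aux

variable {A : Type u} [SmallCategory A] [Abelian A] {J : GrothendieckTopology A}

set_option linter.unusedSectionVars false

/-- Compatibility of a `Meq` family, in convenient form. -/
lemma meq_spec {F : Aᵒᵖ ⥤ AddCommGrpCat.{u}} {Y : A} {S : J.Cover Y} (y : Meq F S)
    {U V W' : A} {f₁ : U ⟶ Y} {f₂ : V ⟶ Y} (h₁ : S f₁) (h₂ : S f₂)
    (g₁ : W' ⟶ U) (g₂ : W' ⟶ V) (w : g₁ ≫ f₁ = g₂ ≫ f₂) :
    F.map g₁.op (y ⟨U, f₁, h₁⟩) = F.map g₂.op (y ⟨V, f₂, h₂⟩) :=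
  y.condition (Cover.Relation.mk' (⟨W', g₁, g₂, w⟩ :
    Cover.Arrow.Relation (⟨U, f₁, h₁⟩ : S.Arrow) (⟨V, f₂, h₂⟩ : S.Arrow)))

lemma mk_add {F : Aᵒᵖ ⥤ AddCommGrpCat.{u}} {X : A} {S : J.Cover X}
    (x y z : Meq F S) (h : ∀ I : S.Arrow, z I = x I + y I) :
    (Plus.mk (D := AddCommGrpCat.{u}) z : (J.plusObj F).obj (op X)) = Plus.mk x + Plus.mk y := by
  dsimp only [Plus.mk]
  have hz : (Meq.equiv F S).symm z =
      (Meq.equiv F S).symm x + (Meq.equiv F S).symm y := by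
    apply (Meq.equiv F S).injective
    rw [Equiv.apply_symm_apply]
    ext I
    have hadd := AddMonoidHom.map_add (ConcreteCategory.hom (C := AddCommGrpCat.{u}) (Multiequalizer.ι (S.index F) I))
      ((Meq.equiv F S).symm x) ((Meq.equiv F S).symm y)
    rw [Meq.equiv_apply, hadd, Meq.equiv_symm_eq_apply x I, Meq.equiv_symm_eq_apply y I, h I]
    rfl
  rw [hz]
  exact AddMonoidHom.map_add _ _ _

lemma mk_refine {F : Aᵒᵖ ⥤ AddCommGrpCat.{u}} {X : A} {S T : J.Cover X}
    (x : Meq F T) (e : S ⟶ T) :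
    (Plus.mk (D := AddCommGrpCat.{u}) (x.refine e) : (J.plusObj F).obj (op X)) = Plus.mk x := by
  rw [eq_mk_iff_exists]
  exact ⟨S, 𝟙 S, e, by ext I; rfl⟩

/-- The plus construction preserves additivity for the single epi topology. -/
lemma plus_additive
    (hJ : ∀ (X : A) (S : Sieve X), S ∈ J X ↔ ∃ (Y : A) (g : Y ⟶ X), Epi g ∧ S.arrows g)
    {F : Aᵒᵖ ⥤ AddCommGrpCat.{u}} (hF : F.Additive) :
    (J.plusObj F).Additive := by
  have key : ∀ {X Y : A} (f g : X ⟶ Y) (ξ : (J.plusObj F).obj (op Y)),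
      (J.plusObj F).map (f + g).op ξ =
        (J.plusObj F).map f.op ξ + (J.plusObj F).map g.op ξ := by
    intro X Y f g ξ
    obtain ⟨S, y, rfl⟩ := exists_rep (D := AddCommGrpCat.{u}) ξ
    rw [res_mk_eq_mk_pullback, res_mk_eq_mk_pullback, res_mk_eq_mk_pullback]
    -- get the epi in the cover
    obtain ⟨Z, p, hp, hpS⟩ := (hJ Y S.1).mp S.2
    haveI := hp
    -- construct a common "refinement" epi over X
    let a₀ : pullback f p ⟶ Z := pullback.snd f p
    let e₁ : pullback f p ⟶ X := pullback.fst f p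
    let g' : pullback f p ⟶ Y := e₁ ≫ g
    let e₂ : pullback g' p ⟶ pullback f p := pullback.fst g' p
    let b : pullback g' p ⟶ Z := pullback.snd g' p
    let w : pullback g' p ⟶ X := e₂ ≫ e₁
    let a : pullback g' p ⟶ Z := e₂ ≫ a₀
    have hwf : w ≫ f = a ≫ p := by
      simp only [w, a, e₁, a₀, Category.assoc, pullback.condition (f := f) (g := p)]
    have hwg : w ≫ g = b ≫ p := by
      simpa only [w, g', Category.assoc] using pullback.condition (f := g') (g := p)
    have hwfg : w ≫ (f + g) = (a + b) ≫ p := by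
      rw [Preadditive.comp_add, Preadditive.add_comp, hwf, hwg]
    haveI : Epi e₁ := inferInstance
    haveI : Epi e₂ := inferInstance
    haveI : Epi w := epi_comp e₂ e₁
    -- the cover of X
    let W : J.Cover X := ⟨Sieve.generate (Presieve.singleton w),
      (hJ X _).mpr ⟨_, w, ‹Epi w›, ⟨_, 𝟙 _, w, Presieve.singleton.mk, Category.id_comp w⟩⟩⟩
    have hfac : ∀ ⦃V : A⦄ (h : V ⟶ X), W h → ∃ l : V ⟶ pullback g' p, l ≫ w = h := by
      rintro V h ⟨Z', l, t, ht, hl⟩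
      cases ht
      exact ⟨l, hl⟩
    -- refinement maps
    have hle : ∀ (u : X ⟶ Y), (∃ c, w ≫ u = c ≫ p) →
        (W ⟶ (J.pullback u).obj S) := by
      intro u hu
      refine homOfLE ?_
      obtain ⟨c, hc⟩ := hu
      rintro V h hh
      obtain ⟨l, rfl⟩ := hfac h hh
      show S.1 ((l ≫ w) ≫ u)
      rw [Category.assoc, hc, ← Category.assoc]
      exact S.1.downward_closed hpS (l ≫ c)
    let ef : W ⟶ (J.pullback f).obj S := hle f ⟨a, hwf⟩
    let eg : W ⟶ (J.pullback g).obj S := hle g ⟨b, hwg⟩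
    let efg : W ⟶ (J.pullback (f + g)).obj S := hle (f + g) ⟨a + b, hwfg⟩
    -- the element of y at p
    set yp := y ⟨Z, p, hpS⟩ with hyp
    -- pointwise values
    have hval : ∀ (u : X ⟶ Y) (c : pullback g' p ⟶ Z) (hc : w ≫ u = c ≫ p)
        (e : W ⟶ (J.pullback u).obj S) (I : W.Arrow),
        ((y.pullback u).refine e) I =
          F.map (Classical.choose (hfac I.f I.hf) ≫ c).op yp := by
      intro u c hc e I
      obtain ⟨l, hl⟩ := hfac I.f I.hf
      have hl' := Classical.choose_spec (hfac I.f I.hf)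
      set l' := Classical.choose (hfac I.f I.hf)
      -- ((y.pullback u).refine e) I = y ⟨I.Y, I.f ≫ u, _⟩
      show y ⟨I.Y, I.f ≫ u, _⟩ = F.map (l' ≫ c).op yp
      have := meq_spec y (f₁ := I.f ≫ u) (f₂ := p)
        (leOfHom e _ I.hf) hpS (𝟙 I.Y) (l' ≫ c)
        (by rw [Category.id_comp, Category.assoc, ← hc, ← Category.assoc, hl'])
      rw [← this, op_id, F.map_id]
      rfl
    -- the sum family
    have hF' := hF
    refine Eq.trans ?_ (congrArg₂ (· + ·)
      (mk_refine (y.pullback f) ef) (mk_refine (y.pullback g) eg))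
    rw [← mk_refine (y.pullback (f + g)) efg]
    apply mk_add
    intro I
    rw [hval f a hwf ef I, hval g b hwg eg I, hval (f + g) (a + b) hwfg efg I]
    have : (Classical.choose (hfac I.f I.hf) ≫ (a + b)).op
        = (Classical.choose (hfac I.f I.hf) ≫ a).op + (Classical.choose (hfac I.f I.hf) ≫ b).op := by
      rw [Preadditive.comp_add]; rfl
    rw [this, hF.map_add]
    rfl
  constructor
  intro X Y f g
  ext ξ
  have := key f.unop g.unop ξ
  simpa using this
end Stmt7Aux
end


/-- for a small abelian category `A` with the single epi topology `J` (a sieve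
covers `X` iff it contains an epimorphism onto `X`), the sheafification of an additive presheaf
of abelian groups is additive. -/
theorem stmt7 {A : Type u} [SmallCategory A] [Abelian A]
    (J : GrothendieckTopology A)
    (hJ : ∀ (X : A) (S : Sieve X), S ∈ J X ↔ ∃ (Y : A) (g : Y ⟶ X), Epi g ∧ S.arrows g)
    (F : Aᵒᵖ ⥤ AddCommGrpCat.{u}) (hF : F.Additive) :
    Nonempty (((presheafToSheaf J AddCommGrpCat.{u}).obj F).val.Additive) := by
  have h1 : (J.plusObj F).Additive := Stmt7Aux.plus_additive hJ hF
  have h2 : (J.sheafify F).Additive := Stmt7Aux.plus_additive hJ h1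
  exact ⟨@Functor.additive_of_iso _ _ _ _ _ _ _ h2 _ (plusPlusIsoSheafify J AddCommGrpCat.{u} F)⟩
end

section
/- Let A be a small abelian category with the single epi topology. A functor F : A^op → Ab is left exact (preserves finite limits) if and only if F is a sheaf for the single epi topology and is additive. Consequently Ind(A) ≃ Shv^add(A; Ab). -/
open CategoryTheory CategoryTheory.Limits Opposite

universe u

namespace Stmt8Aux

variable {A : Type u} [SmallCategory A] [Abelian A]

lemma effectiveEpi_of_epi {X Y : A} (f : X ⟶ Y) [Epi f] : EffectiveEpi f := by
  haveI : NormalEpi f := normalEpiOfEpi f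
  infer_instance

instance : Preregular A where
  exists_fac f g _ := by
    haveI : Epi g := inferInstance
    haveI : Epi (pullback.fst f g) := inferInstance
    exact ⟨pullback f g, pullback.fst f g, effectiveEpi_of_epi _, pullback.snd f g,
      pullback.condition.symm⟩

/-- The single epi topology is the regular topology. -/
lemma topology_eq (J : GrothendieckTopology A)
    (hJ : ∀ (X : A) (S : Sieve X), S ∈ J X ↔ ∃ (Y : A) (g : Y ⟶ X), Epi g ∧ S.arrows g) :
    J = regularTopology A := by
  ext X S
  rw [hJ, regularTopology.mem_sieves_iff_hasEffectiveEpi]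
  constructor
  · rintro ⟨Y, g, hg, hS⟩
    haveI := hg
    exact ⟨Y, g, effectiveEpi_of_epi g, hS⟩
  · rintro ⟨Y, g, hg, hS⟩
    exact ⟨Y, g, inferInstance, hS⟩

/-- Dualizing a coequalizer cofork to an equalizer fork in the opposite category. -/
noncomputable def forkOpOfCofork {X Y Z : A} {a b : X ⟶ Y} {π : Y ⟶ Z} (w : a ≫ π = b ≫ π)
    (h : IsColimit (Cofork.ofπ π w)) :
    IsLimit (Fork.ofι (f := a.op) (g := b.op) π.op
      (by rw [← op_comp, ← op_comp, w])) :=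
  Fork.IsLimit.mk _
    (fun s => (h.desc (Cofork.ofπ s.ι.unop
      (Quiver.Hom.op_inj (by simpa using s.condition)))).op)
    (fun s => Quiver.Hom.unop_inj (by
      have := h.fac (Cofork.ofπ s.ι.unop (Quiver.Hom.op_inj (by simpa using s.condition)))
        WalkingParallelPair.one
      simpa using this))
    (fun s m hm => Quiver.Hom.unop_inj (Cofork.IsColimit.hom_ext h (by
      have h1 : π ≫ m.unop = s.ι.unop := by
        have := congrArg Quiver.Hom.unop hm
        simpa using this
      have h2 : π ≫ h.desc (Cofork.ofπ s.ι.unop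
          (Quiver.Hom.op_inj (by simpa using s.condition))) = s.ι.unop := by
        exact h.fac _ WalkingParallelPair.one
      exact h1.trans h2.symm)))

section Cone

/-- For an epi `g` with kernel fork `(k, hk)`, the biproduct pullback cone presenting the
kernel pair of `g`. -/
noncomputable def kpCone {K Y X : A} (g : Y ⟶ X) (k : K ⟶ Y) (w : k ≫ g = 0) :
    PullbackCone g g :=
  PullbackCone.mk (biprod.fst : Y ⊞ K ⟶ Y) (biprod.fst + biprod.snd ≫ k)
    (by simp [Preadditive.add_comp, Category.assoc, w])

noncomputable def kpConeIsLimit {K Y X : A} (g : Y ⟶ X) (k : K ⟶ Y) (w : k ≫ g = 0)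
    (hk : IsLimit (KernelFork.ofι k w)) : IsLimit (kpCone g k w) := by
  haveI : Mono k := by
    have := mono_of_isLimit_fork hk
    simpa using this
  refine PullbackCone.IsLimit.mk _ (fun s =>
    biprod.lift s.fst (KernelFork.IsLimit.lift' hk (s.snd - s.fst)
      (by simp [Preadditive.sub_comp, s.condition])).1) (fun s => by simp [kpCone]) ?_ ?_
  · intro s
    have hl := (KernelFork.IsLimit.lift' hk (s.snd - s.fst)
      (by simp [Preadditive.sub_comp, s.condition])).2
    simp only [Fork.ι_ofι] at hl
    show _ ≫ (biprod.fst + biprod.snd ≫ k) = s.snd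
    rw [Preadditive.comp_add, biprod.lift_fst, ← Category.assoc, biprod.lift_snd, hl]
    abel
  · intro s m hm₁ hm₂
    have h2 : (m ≫ biprod.snd) ≫ k = s.snd - s.fst := by
      have : m ≫ (biprod.fst + biprod.snd ≫ k) = s.snd := hm₂
      rw [Preadditive.comp_add, ← Category.assoc] at this
      rw [Category.assoc] at this ⊢
      have hfst : m ≫ biprod.fst = s.fst := hm₁
      rw [← this, hfst]
      abel
    apply biprod.hom_ext
    · simpa using hm₁
    · rw [← cancel_mono k]
      have hl := (KernelFork.IsLimit.lift' hk (s.snd - s.fst)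
        (by simp [Preadditive.sub_comp, s.condition])).2
      simp only [Fork.ι_ofι] at hl
      simp only [Category.assoc] at h2 ⊢
      rw [biprod.lift_snd_assoc]
      exact h2.trans hl.symm

end Cone


section Main

variable {F : Aᵒᵖ ⥤ AddCommGrpCat.{u}}

lemma step1 [F.Additive]
    (hF : regularTopology.EqualizerCondition (F ⋙ forget AddCommGrpCat.{u}))
    {K Y X : A} (g : Y ⟶ X) [Epi g] (k : K ⟶ Y) (w : k ≫ g = 0)
    (hk : IsLimit (KernelFork.ofι k w)) :
    Function.Injective (F.map g.op) ∧
      ∀ y : F.obj (op Y), F.map k.op y = 0 → ∃ x, F.map g.op x = y := by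
  haveI := effectiveEpi_of_epi g
  have h := hF g (kpCone g k w) (kpConeIsLimit g k w hk)
  rw [Types.type_equalizer_iff_unique] at h
  have key : ∀ y : F.obj (op Y), F.map k.op y = 0 →
      F.map (biprod.fst : Y ⊞ K ⟶ Y).op y
        = F.map ((biprod.fst : Y ⊞ K ⟶ Y) + biprod.snd ≫ k).op y := by
    intro y hy
    rw [op_add, F.map_add, AddCommGrpCat.hom_add_apply, op_comp, F.map_comp]
    have h2 : (F.map (biprod.snd : Y ⊞ K ⟶ K).op) ((F.map k.op) y) = 0 := by
      rw [hy, map_zero]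
    rw [comp_apply, h2, add_zero]
  constructor
  · intro x x' hxx
    have h0 : F.map k.op (F.map g.op x) = 0 := by
      rw [← comp_apply, ← F.map_comp, ← op_comp, w, op_zero, F.map_zero]
      rfl
    obtain ⟨z, hz, hu⟩ := h (F.map g.op x) (key _ h0)
    exact (hu x rfl).trans (hu x' hxx.symm).symm
  · intro y hy
    obtain ⟨x, hx, -⟩ := h y (key y hy)
    exact ⟨x, hx⟩

noncomputable def mainKernel [F.Additive]
    (hF : regularTopology.EqualizerCondition (F ⋙ forget AddCommGrpCat.{u}))
    {Y X : A} (f : Y ⟶ X) :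
    IsLimit (KernelFork.ofι (F.map (cokernel.π f).op)
      (show F.map (cokernel.π f).op ≫ F.map f.op = 0 by
        rw [← F.map_comp, ← op_comp, cokernel.condition, op_zero, F.map_zero]) :
      Fork (F.map f.op) 0) := by
  have hπ := step1 hF (cokernel.π f) (kernel.ι (cokernel.π f)) (kernel.condition _)
    (kernelIsKernel _)
  have hd := (step1 hF (Abelian.factorThruImage f) (kernel.ι (Abelian.factorThruImage f))
    (kernel.condition _) (kernelIsKernel _)).1
  let S : ShortComplex AddCommGrpCat.{u} := ShortComplex.mk (F.map (cokernel.π f).op) (F.map f.op)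
    (by rw [← F.map_comp, ← op_comp, cokernel.condition, op_zero, F.map_zero])
  haveI : Mono S.f := by
    rw [AddCommGrpCat.mono_iff_injective]
    exact hπ.1
  have hS : S.Exact := by
    rw [ShortComplex.ab_exact_iff]
    intro y hy
    have hfac : F.map (Abelian.factorThruImage f).op (F.map (Abelian.image.ι f).op y)
        = F.map f.op y := by
      rw [← comp_apply, ← F.map_comp, ← op_comp, Abelian.image.fac]
    have h1 : F.map (Abelian.image.ι f).op y = 0 := by
      apply hd
      rw [hfac, hy, map_zero]
    exact hπ.2 y h1
  exact hS.fIsKernel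

lemma preservesFiniteLimits_of_sheaf [F.Additive]
    (hF : Presheaf.IsSheaf (regularTopology A) F) :
    PreservesFiniteLimits F := by
  have hEq : regularTopology.EqualizerCondition (F ⋙ forget AddCommGrpCat.{u}) := by
    rw [regularTopology.equalizerCondition_iff_isSheaf]
    rw [← Presheaf.isSheaf_iff_isSheaf_forget (regularTopology A) F (forget AddCommGrpCat.{u})]
    exact hF
  haveI : ∀ {P Q : Aᵒᵖ} (φ : P ⟶ Q), PreservesLimit (parallelPair φ 0) F := by
    intro P Q φ
    apply preservesLimit_of_preserves_limit_cone
      (CokernelCofork.IsColimit.ofπOp _ (cokernel.condition φ.unop) (cokernelIsCokernel φ.unop))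
    exact (isLimitMapConeForkEquiv' F _).symm (mainKernel hEq φ.unop)
  exact F.preservesFiniteLimits_of_preservesKernels

lemma additive_of_preservesFiniteLimits [PreservesFiniteLimits F] : F.Additive := by
  haveI : F.PreservesZeroMorphisms := inferInstance
  exact Functor.additive_of_preserves_binary_products F

lemma isSheaf_of_preservesFiniteLimits [PreservesFiniteLimits F] :
    Presheaf.IsSheaf (regularTopology A) F := by
  rw [← regularTopology.equalizerCondition_iff_isSheaf]
  intro X B π hπ c hc
  haveI : Epi π := inferInstance
  haveI : NormalEpi π := normalEpiOfEpi π
  have hre : RegularEpi π := NormalEpi.regularEpi π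
  have hkp : IsKernelPair π c.fst c.snd := IsPullback.of_isLimit hc
  have hco : IsColimit (Cofork.ofπ π hkp.w) := IsKernelPair.toCoequalizer hkp hre
  exact ⟨isLimitForkMapOfIsLimit F _ (forkOpOfCofork _ hco)⟩

end Main

end Stmt8Aux

theorem stmt8 {A : Type u} [SmallCategory A] [Abelian A]
    (J : GrothendieckTopology A)
    (hJ : ∀ (X : A) (S : Sieve X), S ∈ J X ↔ ∃ (Y : A) (g : Y ⟶ X), Epi g ∧ S.arrows g) :
    (∀ F : Aᵒᵖ ⥤ AddCommGrpCat.{u},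
      Nonempty (PreservesFiniteLimits F) ↔ (Presheaf.IsSheaf J F ∧ F.Additive)) ∧
    Nonempty ((ObjectProperty.FullSubcategory fun F : Aᵒᵖ ⥤ AddCommGrpCat.{u} => Nonempty (PreservesFiniteLimits F)) ≌
      (ObjectProperty.FullSubcategory fun F : Aᵒᵖ ⥤ AddCommGrpCat.{u} => Presheaf.IsSheaf J F ∧ F.Additive)) := by
  have hJeq : J = regularTopology A := Stmt8Aux.topology_eq J hJ
  subst hJeq
  have main : ∀ F : Aᵒᵖ ⥤ AddCommGrpCat.{u},
      Nonempty (PreservesFiniteLimits F) ↔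
        (Presheaf.IsSheaf (regularTopology A) F ∧ F.Additive) := by
    intro F
    constructor
    · rintro ⟨hP⟩
      haveI := hP
      exact ⟨Stmt8Aux.isSheaf_of_preservesFiniteLimits,
        Stmt8Aux.additive_of_preservesFiniteLimits⟩
    · rintro ⟨hs, hadd⟩
      haveI := hadd
      exact ⟨Stmt8Aux.preservesFiniteLimits_of_sheaf hs⟩
  refine ⟨main, ⟨⟨ObjectProperty.ιOfLE (fun F hF => (main F).1 hF),
    ObjectProperty.ιOfLE (fun F hF => (main F).2 hF),
    NatIso.ofComponents (fun X => ⟨𝟙 X, 𝟙 X, Category.id_comp _, Category.id_comp _⟩)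
      (fun f => (Category.comp_id _).trans (Category.id_comp _).symm),
    NatIso.ofComponents (fun X => ⟨𝟙 X, 𝟙 X, Category.id_comp _, Category.id_comp _⟩)
      (fun f => (Category.comp_id _).trans (Category.id_comp _).symm), ?_⟩⟩⟩
  intro X
  exact Category.id_comp _
end

section
/- In an abelian category A, given objects X, Y and an epimorphism (f,g) : Z ↠ X ⊕ Y, there exist epimorphisms f' : X' ↠ X and g' : Y' ↠ Y such that the morphism (f',g') : X' ⊕ Y' → X ⊕ Y factors through Z. Specifically one may take X' = ker(g) and Y' = ker(f) with the induced maps. -/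
open CategoryTheory CategoryTheory.Limits

universe v u

section

variable {A : Type*} [Category A] [Abelian A] {Z X Y : A}

/-- Lifting `x ≫ inl` through `(q, r)` up to refinement gives a generalized element `z` of `Z`
with `z ≫ r = 0`; it factors through `ker r` and maps to `x` under `q`. -/
lemma epi_kernel_ι_comp_of_epi_lift (q : Z ⟶ X) (r : Z ⟶ Y) [Epi (biprod.lift q r)] :
    Epi (kernel.ι r ≫ q) := by
  rw [epi_iff_surjective_up_to_refinements]
  intro T x
  obtain ⟨T', π, _, z, hz⟩ :=
    surjective_up_to_refinements_of_epi (biprod.lift q r) (x ≫ biprod.inl)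
  have hzq : π ≫ x = z ≫ q := by simpa using hz =≫ biprod.fst
  have hzr : z ≫ r = 0 := by simpa using (hz =≫ biprod.snd).symm
  exact ⟨T', π, inferInstance, kernel.lift r z hzr, by simp [hzq]⟩

lemma biprod_desc_kernel_ι_comp_lift (q : Z ⟶ X) (r : Z ⟶ Y) :
    biprod.desc (kernel.ι r) (kernel.ι q) ≫ biprod.lift q r =
      biprod.map (kernel.ι r ≫ q) (kernel.ι q ≫ r) := by
  ext <;> simp

end

/-- in an abelian category, given an epimorphism `(f,g) : Z ↠ X ⊞ Y`, the
restrictions `f' : ker g ⟶ X` of `f` and `g' : ker f ⟶ Y` of `g` are epimorphisms, and the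
morphism `(f',g') : ker g ⊞ ker f ⟶ X ⊞ Y` factors through `Z`. -/
theorem stmt9 {A : Type u} [Category.{v} A] [Abelian A]
    {Z X Y : A} (p : Z ⟶ X ⊞ Y) (hp : Epi p) :
    Epi (kernel.ι (p ≫ biprod.snd) ≫ p ≫ biprod.fst) ∧
    Epi (kernel.ι (p ≫ biprod.fst) ≫ p ≫ biprod.snd) ∧
    ∃ h : kernel (p ≫ biprod.snd) ⊞ kernel (p ≫ biprod.fst) ⟶ Z,
      h ≫ p = biprod.map (kernel.ι (p ≫ biprod.snd) ≫ p ≫ biprod.fst)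
        (kernel.ι (p ≫ biprod.fst) ≫ p ≫ biprod.snd) := by
  have hp_lift : biprod.lift (p ≫ biprod.fst) (p ≫ biprod.snd) = p := by ext <;> simp
  have hp_swap : biprod.lift (p ≫ biprod.snd) (p ≫ biprod.fst) =
      p ≫ (biprod.braiding X Y).hom := by ext <;> simp
  have : Epi (biprod.lift (p ≫ biprod.fst) (p ≫ biprod.snd)) := by rwa [hp_lift]
  have : Epi (biprod.lift (p ≫ biprod.snd) (p ≫ biprod.fst)) := by
    rw [hp_swap]; exact epi_comp _ _
  refine ⟨epi_kernel_ι_comp_of_epi_lift _ _, epi_kernel_ι_comp_of_epi_lift _ _,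
    biprod.desc (kernel.ι _) (kernel.ι _), ?_⟩
  simpa only [hp_lift] using biprod_desc_kernel_ι_comp_lift (p ≫ biprod.fst) (p ≫ biprod.snd)
end

section
/- Let A be abelian and B ⊆ A strictly full, closed under subobjects and quotients, and assume every object of A is an extension of two objects of B. Then the map γ : K₀(A) → K₀(B) defined by γ([X]) = [Y] + [X/Y] for any choice of subobject Y ⊆ X with Y, X/Y ∈ B is well-defined (independent of the choice of Y and additive on short exact sequences), and γ is inverse to the map K₀(B) → K₀(A) induced by the inclusion; hence K₀(B) ≅ K₀(A). -/
open CategoryTheory CategoryTheory.Limits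

universe v u

variable {A : Type u} [Category.{v} A] [Abelian A]

/-- Isomorphism classes of objects of `A` satisfying `P` (the objects of `B`). -/
def K0Setoid (P : A → Prop) : Setoid {X : A // P X} where
  r X Y := Nonempty (X.1 ≅ Y.1)
  iseqv := ⟨fun _ => ⟨Iso.refl _⟩, fun ⟨e⟩ => ⟨e.symm⟩, fun ⟨e⟩ ⟨e'⟩ => ⟨e.trans e'⟩⟩

/-- The subgroup of relations coming from short exact sequences with all terms in `B`. -/
def K0Rel (P : A → Prop) : AddSubgroup (FreeAbelianGroup (Quotient (K0Setoid P))) :=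
  AddSubgroup.closure {x | ∃ (S : ShortComplex A) (_ : S.ShortExact)
    (h₁ : P S.X₁) (h₂ : P S.X₂) (h₃ : P S.X₃),
      x = FreeAbelianGroup.of (Quotient.mk (K0Setoid P) ⟨S.X₂, h₂⟩)
        - FreeAbelianGroup.of (Quotient.mk (K0Setoid P) ⟨S.X₁, h₁⟩)
        - FreeAbelianGroup.of (Quotient.mk (K0Setoid P) ⟨S.X₃, h₃⟩)}

/-- The Grothendieck group `K₀` of the (strictly full, closed under subobjects and quotients)
subcategory of `A` of objects satisfying `P`: the free abelian group on isomorphism classes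
modulo the relation `[X₂] = [X₁] + [X₃]` for every short exact sequence `0 → X₁ → X₂ → X₃ → 0`
with all terms satisfying `P`. -/
def K0 (P : A → Prop) := FreeAbelianGroup (Quotient (K0Setoid P)) ⧸ K0Rel P

noncomputable instance (P : A → Prop) : AddCommGroup (K0 P) :=
  QuotientAddGroup.Quotient.addCommGroup (K0Rel P)

/-- The class in `K₀` of an object satisfying `P`. -/
def K0mk (P : A → Prop) (X : A) (h : P X) : K0 P :=
  QuotientAddGroup.mk (FreeAbelianGroup.of (Quotient.mk (K0Setoid P) ⟨X, h⟩))

section Aux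

variable (P : A → Prop)

lemma K0mk_eq_of_iso {X Y : A} (hX : P X) (hY : P Y) (e : X ≅ Y) :
    K0mk P X hX = K0mk P Y hY := by
  unfold K0mk
  exact congrArg _ (congrArg _ (Quotient.sound ⟨e⟩))

lemma K0mk_rel (S : ShortComplex A) (hS : S.ShortExact)
    (h₁ : P S.X₁) (h₂ : P S.X₂) (h₃ : P S.X₃) :
    K0mk P S.X₂ h₂ = K0mk P S.X₁ h₁ + K0mk P S.X₃ h₃ := by
  have hm : FreeAbelianGroup.of (Quotient.mk (K0Setoid P) ⟨S.X₂, h₂⟩)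
        - FreeAbelianGroup.of (Quotient.mk (K0Setoid P) ⟨S.X₁, h₁⟩)
        - FreeAbelianGroup.of (Quotient.mk (K0Setoid P) ⟨S.X₃, h₃⟩) ∈ K0Rel P :=
    AddSubgroup.subset_closure ⟨S, hS, h₁, h₂, h₃, rfl⟩
  have h0 := (QuotientAddGroup.eq_zero_iff _).2 hm
  have : K0mk P S.X₂ h₂ - K0mk P S.X₁ h₁ - K0mk P S.X₃ h₃ = 0 := by
    rw [QuotientAddGroup.mk_sub, QuotientAddGroup.mk_sub] at h0
    exact h0
  rw [sub_sub, sub_eq_zero] at this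
  exact this

lemma shortExact_mono {Y X : A} (f : Y ⟶ X) [Mono f] :
    (ShortComplex.mk f (cokernel.π f) (cokernel.condition f)).ShortExact :=
  { exact := ShortComplex.exact_of_g_is_cokernel _ (cokernelIsCokernel f) }

lemma K0mk_mono {Y X : A} (f : Y ⟶ X) [Mono f] (hY : P Y) (hX : P X)
    (hQ : P (cokernel f)) :
    K0mk P X hX = K0mk P Y hY + K0mk P (cokernel f) hQ :=
  K0mk_rel P _ (shortExact_mono f) hY hX hQ

end Aux

example : True := trivial
section Aux2

variable (P : A → Prop)
variable (hsub : ∀ {X Y : A} (f : X ⟶ Y), Mono f → P Y → P X)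
variable (hquot : ∀ {X Y : A} (f : X ⟶ Y), Epi f → P X → P Y)

/-- `[Y] = [ker u] + [im u]`. -/
lemma K0mk_src {Y W : A} (u : Y ⟶ W) (hY : P Y) :
    K0mk P Y hY = K0mk P (kernel u) (hsub (kernel.ι u) inferInstance hY)
      + K0mk P (image u) (hquot (factorThruImage u) inferInstance hY) := by
  have him : P (image u) := hquot (factorThruImage u) inferInstance hY
  have hcoim : P (cokernel (kernel.ι u)) :=
    hsub (Abelian.coimageIsoImage' u).hom inferInstance him
  rw [K0mk_mono P (kernel.ι u) (hsub (kernel.ι u) inferInstance hY) hY hcoim]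
  congr 1
  exact K0mk_eq_of_iso P hcoim him (Abelian.coimageIsoImage' u)

/-- `[W] = [im u] + [coker u]`. -/
lemma K0mk_tgt {Y W : A} (u : Y ⟶ W) (hW : P W) :
    K0mk P W hW = K0mk P (image u) (hsub (image.ι u) inferInstance hW)
      + K0mk P (cokernel u) (hquot (cokernel.π u) inferInstance hW) := by
  have hcu : P (cokernel u) := hquot (cokernel.π u) inferInstance hW
  have e : cokernel (image.ι u) ≅ cokernel u :=
    (cokernelEpiComp (factorThruImage u) (image.ι u)).symm ≪≫
      cokernelIsoOfEq (image.fac u)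
  have hci : P (cokernel (image.ι u)) := hsub e.hom inferInstance hcu
  rw [K0mk_mono P (image.ι u) (hsub (image.ι u) inferInstance hW) hW hci]
  congr 1
  exact K0mk_eq_of_iso P hci hcu e

end Aux2

example : True := trivial
section Aux3

/-- `Y ∩ Y'` is symmetric: `ker (Y → X/Y') ≅ ker (Y' → X/Y)`. -/
noncomputable def kerSwapIso {X Y Y' : A} (f : Y ⟶ X) (f' : Y' ⟶ X) [Mono f] [Mono f'] :
    kernel (f ≫ cokernel.π f') ≅ kernel (f' ≫ cokernel.π f) := by
  have w1 : (kernel.ι (f ≫ cokernel.π f') ≫ f) ≫ cokernel.π f' = 0 := by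
    rw [Category.assoc]; exact kernel.condition _
  have w2 : (kernel.ι (f' ≫ cokernel.π f) ≫ f') ≫ cokernel.π f = 0 := by
    rw [Category.assoc]; exact kernel.condition _
  let u : kernel (f ≫ cokernel.π f') ⟶ Y' := Abelian.monoLift f' _ w1
  let u' : kernel (f' ≫ cokernel.π f) ⟶ Y := Abelian.monoLift f _ w2
  have hu : u ≫ f' = kernel.ι _ ≫ f := Abelian.monoLift_comp f' _ w1
  have hu' : u' ≫ f = kernel.ι _ ≫ f' := Abelian.monoLift_comp f _ w2
  refine ⟨kernel.lift _ u ?_, kernel.lift _ u' ?_, ?_, ?_⟩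
  · rw [← Category.assoc, hu, Category.assoc, cokernel.condition, comp_zero]
  · rw [← Category.assoc, hu', Category.assoc, cokernel.condition, comp_zero]
  · apply equalizer.hom_ext
    rw [Category.id_comp, Category.assoc, kernel.lift_ι]
    rw [← cancel_mono f, Category.assoc, hu', ← Category.assoc, kernel.lift_ι, hu]
  · apply equalizer.hom_ext
    rw [Category.id_comp, Category.assoc, kernel.lift_ι]
    rw [← cancel_mono f', Category.assoc, hu, ← Category.assoc, kernel.lift_ι, hu']

/-- `X/(Y + Y')` is symmetric: `coker (Y → X/Y') ≅ coker (Y' → X/Y)`. -/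
noncomputable def cokerSwapIso {X Y Y' : A} (f : Y ⟶ X) (f' : Y' ⟶ X) :
    cokernel (f ≫ cokernel.π f') ≅ cokernel (f' ≫ cokernel.π f) := by
  have h1 : f' ≫ cokernel.π f ≫ cokernel.π (f' ≫ cokernel.π f) = 0 := by
    rw [← Category.assoc]; exact cokernel.condition _
  have h2 : f ≫ cokernel.π f' ≫ cokernel.π (f ≫ cokernel.π f') = 0 := by
    rw [← Category.assoc]; exact cokernel.condition _
  let t1 : cokernel f' ⟶ cokernel (f' ≫ cokernel.π f) :=
    cokernel.desc f' (cokernel.π f ≫ cokernel.π _) h1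
  let t2 : cokernel f ⟶ cokernel (f ≫ cokernel.π f') :=
    cokernel.desc f (cokernel.π f' ≫ cokernel.π _) h2
  have ht1 : cokernel.π f' ≫ t1 = cokernel.π f ≫ cokernel.π _ := cokernel.π_desc _ _ _
  have ht2 : cokernel.π f ≫ t2 = cokernel.π f' ≫ cokernel.π _ := cokernel.π_desc _ _ _
  refine ⟨cokernel.desc _ t1 ?_, cokernel.desc _ t2 ?_, ?_, ?_⟩
  · rw [Category.assoc, ht1, ← Category.assoc, cokernel.condition, zero_comp]
  · rw [Category.assoc, ht2, ← Category.assoc, cokernel.condition, zero_comp]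
  · apply coequalizer.hom_ext
    rw [Category.comp_id, ← Category.assoc, cokernel.π_desc]
    rw [← cancel_epi (cokernel.π f'), ← Category.assoc, ht1, Category.assoc,
      cokernel.π_desc]
    exact ht2
  · apply coequalizer.hom_ext
    rw [Category.comp_id, ← Category.assoc, cokernel.π_desc]
    rw [← cancel_epi (cokernel.π f), ← Category.assoc, ht2, Category.assoc,
      cokernel.π_desc]
    exact ht1

/-- Independence of the choice of admissible subobject. -/
lemma K0_indep (P : A → Prop)
    (hsub : ∀ {X Y : A} (f : X ⟶ Y), Mono f → P Y → P X)
    (hquot : ∀ {X Y : A} (f : X ⟶ Y), Epi f → P X → P Y)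
    {X Y Y' : A} (f : Y ⟶ X) (f' : Y' ⟶ X) [Mono f] [Mono f']
    (hY : P Y) (hY' : P Y') (hc : P (cokernel f)) (hc' : P (cokernel f')) :
    K0mk P Y hY + K0mk P (cokernel f) hc
      = K0mk P Y' hY' + K0mk P (cokernel f') hc' := by
  set g : Y ⟶ cokernel f' := f ≫ cokernel.π f' with hg
  set g' : Y' ⟶ cokernel f := f' ≫ cokernel.π f with hg'
  rw [K0mk_src P hsub hquot g hY, K0mk_src P hsub hquot g' hY',
    K0mk_tgt P hsub hquot g' hc, K0mk_tgt P hsub hquot g hc']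
  rw [K0mk_eq_of_iso P (hsub (kernel.ι g) inferInstance hY)
    (hsub (kernel.ι g') inferInstance hY') (kerSwapIso f f')]
  rw [K0mk_eq_of_iso P (hquot (cokernel.π g') inferInstance hc)
    (hquot (cokernel.π g) inferInstance hc') (cokerSwapIso f' f)]
  abel

end Aux3

example : True := trivial
section Aux4

open CategoryTheory.Abelian.Pseudoelement in
attribute [local instance] CategoryTheory.Abelian.Pseudoelement.objectToSort
  CategoryTheory.Abelian.Pseudoelement.homToFun

open CategoryTheory.Abelian.Pseudoelement

lemma K0_additive (P : A → Prop)
    (hsub : ∀ {X Y : A} (f : X ⟶ Y), Mono f → P Y → P X)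
    (hquot : ∀ {X Y : A} (f : X ⟶ Y), Epi f → P X → P Y)
    (S : ShortComplex A) (hS : S.ShortExact)
    {Y : A} (f : Y ⟶ S.X₂) [Mono f] (hY : P Y) (hcf : P (cokernel f))
    {Y₁ : A} (f₁ : Y₁ ⟶ S.X₁) [Mono f₁] (hY₁ : P Y₁) (hc₁ : P (cokernel f₁))
    {Y₃ : A} (f₃ : Y₃ ⟶ S.X₃) [Mono f₃] (hY₃ : P Y₃) (hc₃ : P (cokernel f₃)) :
    K0mk P Y hY + K0mk P (cokernel f) hcf
      = (K0mk P Y₁ hY₁ + K0mk P (cokernel f₁) hc₁)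
        + (K0mk P Y₃ hY₃ + K0mk P (cokernel f₃) hc₃) := by
  haveI := hS.mono_f
  haveI := hS.epi_g
  set u : Y ⟶ S.X₃ := f ≫ S.g with hu
  set k : kernel u ⟶ Y := kernel.ι u with hk
  have wm : (k ≫ f) ≫ S.g = 0 := by rw [Category.assoc, ← hu]; exact kernel.condition u
  set m₁ : kernel u ⟶ S.X₁ := hS.exact.lift (k ≫ f) wm with hm₁def
  have hm₁ : m₁ ≫ S.f = k ≫ f := hS.exact.lift_f _ wm
  haveI : Mono m₁ := by
    have : Mono (m₁ ≫ S.f) := by rw [hm₁]; infer_instance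
    exact mono_of_mono m₁ S.f
  set φ : cokernel m₁ ⟶ cokernel f := cokernel.map m₁ f k S.f hm₁ with hφdef
  have hπφ : cokernel.π m₁ ≫ φ = S.f ≫ cokernel.π f := cokernel.π_desc _ _ _
  have wψ : f ≫ S.g = 𝟙 Y ≫ u := by rw [Category.id_comp]
  set ψ : cokernel f ⟶ cokernel u := cokernel.map f u (𝟙 Y) S.g wψ with hψdef
  have hπψ : cokernel.π f ≫ ψ = S.g ≫ cokernel.π u := cokernel.π_desc _ _ _
  haveI hepiψ : Epi ψ := by
    have : Epi (cokernel.π f ≫ ψ) := by rw [hπψ]; exact epi_comp _ _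
    exact epi_of_epi (cokernel.π f) ψ
  -- the top row is exact at Y
  have exTop : (ShortComplex.mk k u (kernel.condition u)).Exact :=
    ShortComplex.exact_of_f_is_kernel _ (kernelIsKernel u)
  have exU : (ShortComplex.mk u (cokernel.π u) (cokernel.condition u)).Exact :=
    ShortComplex.exact_of_g_is_cokernel _ (cokernelIsCokernel u)
  -- φ is mono
  haveI hmonoφ : Mono φ := by
    apply mono_of_zero_of_map_zero
    intro x hx
    obtain ⟨x₁, hx₁⟩ := pseudo_surjective_of_epi (cokernel.π m₁) x
    have hx₁' : pseudoApply (cokernel.π m₁) x₁ = x := hx₁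
    have hx' : pseudoApply φ (pseudoApply (cokernel.π m₁) x₁) = 0 := by
      rw [hx₁']; exact hx
    have h1 : pseudoApply (cokernel.π f) (pseudoApply S.f x₁) = 0 := by
      rw [← Abelian.Pseudoelement.comp_apply, ← hπφ, Abelian.Pseudoelement.comp_apply]
      exact hx'
    obtain ⟨y, hy⟩ := pseudo_exact_of_exact (shortExact_mono f).exact _ h1
    have hy' : pseudoApply f y = pseudoApply S.f x₁ := hy
    have h2 : pseudoApply u y = 0 := by
      rw [hu, Abelian.Pseudoelement.comp_apply, hy', ← Abelian.Pseudoelement.comp_apply,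
        S.zero]
      exact zero_apply _ _
    obtain ⟨z, hz⟩ := pseudo_exact_of_exact exTop _ h2
    have hz' : pseudoApply k z = y := hz
    have h3 : pseudoApply S.f (pseudoApply m₁ z) = pseudoApply S.f x₁ := by
      rw [← Abelian.Pseudoelement.comp_apply, hm₁, Abelian.Pseudoelement.comp_apply, hz', hy']
    have h4 : pseudoApply m₁ z = x₁ := pseudo_injective_of_mono S.f h3
    rw [← hx₁', ← h4, ← Abelian.Pseudoelement.comp_apply, cokernel.condition]
    exact zero_apply _ _
  -- the middle column is exact
  have w0 : φ ≫ ψ = 0 := by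
    rw [← cancel_epi (cokernel.π m₁), ← Category.assoc, hπφ, Category.assoc, hπψ,
      ← Category.assoc, S.zero, zero_comp, comp_zero]
  have exMid : (ShortComplex.mk φ ψ w0).Exact := by
    apply exact_of_pseudo_exact
    intro b hb
    obtain ⟨x₂, hx₂⟩ := pseudo_surjective_of_epi (cokernel.π f) b
    have hx₂' : pseudoApply (cokernel.π f) x₂ = b := hx₂
    have hb' : pseudoApply ψ (pseudoApply (cokernel.π f) x₂) = 0 := by
      rw [hx₂']; exact hb
    have h1 : pseudoApply (cokernel.π u) (pseudoApply S.g x₂) = 0 := by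
      rw [← Abelian.Pseudoelement.comp_apply, ← hπψ, Abelian.Pseudoelement.comp_apply]
      exact hb'
    obtain ⟨y, hy⟩ := pseudo_exact_of_exact exU _ h1
    have hy' : pseudoApply u y = pseudoApply S.g x₂ := hy
    have h2 : pseudoApply S.g x₂ = pseudoApply S.g (pseudoApply f y) := by
      rw [← Abelian.Pseudoelement.comp_apply, ← hu, hy']
    obtain ⟨z, hz0, hz⟩ := sub_of_eq_image S.g x₂ (pseudoApply f y) h2
    have hz0' : pseudoApply S.g z = 0 := hz0
    obtain ⟨x₁, hx₁⟩ := pseudo_exact_of_exact hS.exact _ hz0'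
    have hx₁' : pseudoApply S.f x₁ = z := hx₁
    refine ⟨pseudoApply (cokernel.π m₁) x₁, ?_⟩
    have hfz : pseudoApply (cokernel.π f) (pseudoApply f y) = 0 := by
      rw [← Abelian.Pseudoelement.comp_apply, cokernel.condition]
      exact zero_apply _ _
    have key : pseudoApply φ (pseudoApply (cokernel.π m₁) x₁) = pseudoApply (cokernel.π f) x₂ := by
      rw [← Abelian.Pseudoelement.comp_apply, hπφ, Abelian.Pseudoelement.comp_apply, hx₁']
      exact hz _ (cokernel.π f) hfz
    rw [← hx₂']
    exact key
  have SESmid : (ShortComplex.mk φ ψ w0).ShortExact := { exact := exMid }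
  -- P facts
  have hPker : P (kernel u) := hsub k inferInstance hY
  have hPim : P (image u) := hquot (factorThruImage u) inferInstance hY
  have hPcm₁ : P (cokernel m₁) := hsub φ inferInstance hcf
  have hPcu : P (cokernel u) := hquot ψ inferInstance hcf
  have eci : cokernel (image.ι u) ≅ cokernel u :=
    (cokernelEpiComp (factorThruImage u) (image.ι u)).symm ≪≫
      cokernelIsoOfEq (image.fac u)
  have hPci : P (cokernel (image.ι u)) := hsub eci.hom inferInstance hPcu
  -- assemble
  have e1 := K0mk_src P hsub hquot u hY
  have e2 := K0mk_rel P _ SESmid hPcm₁ hcf hPcu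
  have e3 := K0_indep P hsub hquot f₁ m₁ hY₁ hPker hc₁ hPcm₁
  have e4 := K0_indep P hsub hquot f₃ (image.ι u) hY₃ hPim hc₃ hPci
  have e5 := K0mk_eq_of_iso P hPci hPcu eci
  rw [e1, e2, e3, e4, e5]
  abel

end Aux4

example : True := trivial
section Aux5

lemma K0_hom_ext {P : A → Prop} {G : Type*} [AddCommGroup G] (F F' : K0 P →+ G)
    (h : ∀ (X : A) (hX : P X), F (K0mk P X hX) = F' (K0mk P X hX)) : F = F' := by
  ext x
  refine QuotientAddGroup.induction_on x ?_
  intro y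
  refine FreeAbelianGroup.induction_on y ?_ ?_ ?_ ?_
  · rw [QuotientAddGroup.mk_zero]; exact (map_zero F).trans (map_zero F').symm
  · intro q
    obtain ⟨⟨X, hX⟩, rfl⟩ := q.exists_rep
    exact h X hX
  · intro q hq
    rw [QuotientAddGroup.mk_neg]
    exact (map_neg F _).trans ((congrArg Neg.neg hq).trans (map_neg F' _).symm)
  · intro a b ha hb
    rw [QuotientAddGroup.mk_add]
    exact (map_add F _ _).trans ((congrArg₂ (· + ·) ha hb).trans (map_add F' _ _).symm)

end Aux5

example : True := trivial
/-- if every object of `A` is an extension of two objects of `B`, the assignment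
`γ([X]) = [Y] + [X/Y]` (for any subobject `Y ⊆ X` with `Y, X/Y ∈ B`) gives a well-defined
group homomorphism `K₀(A) → K₀(B)` which is inverse to the map `K₀(B) → K₀(A)` induced by the
inclusion; in particular `K₀(B) ≅ K₀(A)`. -/
theorem stmt19 (P : A → Prop)
    (hsub : ∀ {X Y : A} (f : X ⟶ Y), Mono f → P Y → P X)
    (hquot : ∀ {X Y : A} (f : X ⟶ Y), Epi f → P X → P Y)
    (hext : ∀ X : A, ∃ (Y : A) (f : Y ⟶ X), Mono f ∧ P Y ∧ P (cokernel f)) :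
    ∃ (ι : K0 P →+ K0 (fun _ : A => True)) (γ : K0 (fun _ : A => True) →+ K0 P),
      (∀ (X : A) (h : P X), ι (K0mk P X h) = K0mk _ X trivial) ∧
      (∀ (X Y : A) (f : Y ⟶ X) (_ : Mono f) (hY : P Y) (hQ : P (cokernel f)),
        γ (K0mk _ X trivial) = K0mk P Y hY + K0mk P (cokernel f) hQ) ∧
      γ.comp ι = AddMonoidHom.id _ ∧ ι.comp γ = AddMonoidHom.id _ := by
  classical
  -- choice of an admissible subobject for every object
  let Yc : A → A := fun X => (hext X).choose
  let fc : ∀ X : A, Yc X ⟶ X := fun X => (hext X).choose_spec.choose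
  have hc : ∀ X : A, Mono (fc X) ∧ P (Yc X) ∧ P (cokernel (fc X)) := fun X =>
    (hext X).choose_spec.choose_spec
  let γ₀ : A → K0 P := fun X =>
    K0mk P (Yc X) (hc X).2.1 + K0mk P (cokernel (fc X)) (hc X).2.2
  have key : ∀ (X W : A) (f : W ⟶ X), Mono f → ∀ (hW : P W) (hQ : P (cokernel f)),
      γ₀ X = K0mk P W hW + K0mk P (cokernel f) hQ := by
    intro X W f hf hW hQ
    haveI := hf
    haveI := (hc X).1
    exact K0_indep P hsub hquot (fc X) f (hc X).2.1 hW (hc X).2.2 hQ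
  have γiso : ∀ {X X' : A}, (X ≅ X') → γ₀ X = γ₀ X' := by
    intro X X' e
    haveI := (hc X).1
    haveI : Mono (fc X ≫ e.hom) := mono_comp _ _
    have hQ' : P (cokernel (fc X ≫ e.hom)) :=
      hsub (cokernelCompIsIso (fc X) e.hom).hom inferInstance (hc X).2.2
    rw [key X' (Yc X) (fc X ≫ e.hom) inferInstance (hc X).2.1 hQ']
    show K0mk P (Yc X) (hc X).2.1 + K0mk P (cokernel (fc X)) (hc X).2.2 = _
    congr 1
    exact K0mk_eq_of_iso P _ _ (cokernelCompIsIso (fc X) e.hom).symm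
  -- the map γ
  let γq : Quotient (K0Setoid (fun _ : A => True)) → K0 P :=
    Quotient.lift (fun X => γ₀ X.1) (fun a b h => γiso h.some)
  let γ₁ : FreeAbelianGroup (Quotient (K0Setoid (fun _ : A => True))) →+ K0 P :=
    FreeAbelianGroup.lift γq
  have hγ₁of : ∀ (X : A) (h : True),
      γ₁ (FreeAbelianGroup.of (Quotient.mk (K0Setoid (fun _ : A => True)) ⟨X, h⟩)) = γ₀ X :=
    fun X h => FreeAbelianGroup.lift_apply_of _ _
  have hkerγ : K0Rel (fun _ : A => True) ≤ γ₁.ker := by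
    refine (AddSubgroup.closure_le _).2 ?_
    rintro x ⟨S, hSe, h₁, h₂, h₃, rfl⟩
    haveI := (hc S.X₂).1
    haveI := (hc S.X₁).1
    haveI := (hc S.X₃).1
    have hadd : γ₀ S.X₂ = γ₀ S.X₁ + γ₀ S.X₃ :=
      K0_additive P hsub hquot S hSe (fc S.X₂) (hc S.X₂).2.1 (hc S.X₂).2.2
        (fc S.X₁) (hc S.X₁).2.1 (hc S.X₁).2.2 (fc S.X₃) (hc S.X₃).2.1 (hc S.X₃).2.2
    simp only [SetLike.mem_coe, AddMonoidHom.mem_ker, map_sub, hγ₁of, hadd]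
    abel
  let γ : K0 (fun _ : A => True) →+ K0 P := QuotientAddGroup.lift _ γ₁ hkerγ
  have hγmk : ∀ (X : A), γ (K0mk (fun _ : A => True) X trivial) = γ₀ X := by
    intro X
    exact (QuotientAddGroup.lift_mk' (K0Rel (fun _ : A => True)) hkerγ _).trans (hγ₁of X trivial)
  -- the map ι
  let ι₀ : Quotient (K0Setoid P) → K0 (fun _ : A => True) :=
    Quotient.lift (fun X => K0mk (fun _ : A => True) X.1 trivial)
      (fun a b h => K0mk_eq_of_iso _ _ _ h.some)
  let ι₁ : FreeAbelianGroup (Quotient (K0Setoid P)) →+ K0 (fun _ : A => True) :=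
    FreeAbelianGroup.lift ι₀
  have hι₁of : ∀ (X : A) (h : P X),
      ι₁ (FreeAbelianGroup.of (Quotient.mk (K0Setoid P) ⟨X, h⟩))
        = K0mk (fun _ : A => True) X trivial :=
    fun X h => FreeAbelianGroup.lift_apply_of _ _
  have hkerι : K0Rel P ≤ ι₁.ker := by
    refine (AddSubgroup.closure_le _).2 ?_
    rintro x ⟨S, hSe, h₁, h₂, h₃, rfl⟩
    have hrel := K0mk_rel (fun _ : A => True) S hSe trivial trivial trivial
    simp only [SetLike.mem_coe, AddMonoidHom.mem_ker, map_sub, hι₁of, hrel]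
    abel
  let ι : K0 P →+ K0 (fun _ : A => True) := QuotientAddGroup.lift _ ι₁ hkerι
  have hιmk : ∀ (X : A) (h : P X),
      ι (K0mk P X h) = K0mk (fun _ : A => True) X trivial := by
    intro X h
    exact (QuotientAddGroup.lift_mk' (K0Rel P) hkerι _).trans (hι₁of X h)
  refine ⟨ι, γ, hιmk, ?_, ?_, ?_⟩
  · intro X Y f hf hY hQ
    rw [hγmk X]
    exact key X Y f hf hY hQ
  · apply K0_hom_ext
    intro X hX
    rw [AddMonoidHom.comp_apply, AddMonoidHom.id_apply, hιmk X hX, hγmk X,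
      key X (Yc X) (fc X) (hc X).1 (hc X).2.1 (hc X).2.2]
    haveI := (hc X).1
    exact (K0mk_mono P (fc X) (hc X).2.1 hX (hc X).2.2).symm
  · apply K0_hom_ext
    intro X _
    haveI := (hc X).1
    rw [AddMonoidHom.comp_apply, AddMonoidHom.id_apply, hγmk X]
    show ι (K0mk P (Yc X) (hc X).2.1 + K0mk P (cokernel (fc X)) (hc X).2.2) = _
    rw [map_add, hιmk _ (hc X).2.1, hιmk _ (hc X).2.2]
    exact (K0mk_mono (fun _ : A => True) (fc X) trivial trivial trivial).symm
end
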